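/- arXiv:1905.07850 — 2 statements merged into one kernel-verified Lean document; each statement's English description precedes it below -/
import Mathlib

section
/- If g is an automorphism of ([ℕ]^{<ω}, (E_i)_{i∈ℕ}) with g(∅) = H, then for all finite F, g(F) = F △ H; the proof proceeds by induction on the cardinality of F. -/
open scoped symmDiff

/-- `E i F G` holds iff the symmetric difference of `F` and `G` is `{i}`. -/
def Erel (i : ℕ) (F G : Finset ℕ) : Prop := F ∆ G = {i}

theorem Finset.insert_eq_symmDiff_singleton {α : Type*} [DecidableEq α] {a : α} {s : Finset α}
    (h : a ∉ s) : insert a s = s ∆ {a} := by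
  rw [(Finset.disjoint_singleton_right.2 h).symmDiff_eq_sup, Finset.sup_eq_union,
    Finset.union_comm, ← Finset.insert_eq]

theorem Finset.eq_symmDiff_of_map_symmDiff_singleton {α : Type*} [DecidableEq α]
    {g : Finset α → Finset α} (hg : ∀ F a, g (F ∆ {a}) = g F ∆ {a}) (F : Finset α) :
    g F = F ∆ g ∅ := by
  induction F using Finset.induction_on with
  | empty => exact (bot_symmDiff _).symm
  | insert a s ha ih =>
    rw [Finset.insert_eq_symmDiff_singleton ha, hg, ih, symmDiff_right_comm]

theorem Erel_symmDiff_singleton (i : ℕ) (F : Finset ℕ) : Erel i F (F ∆ {i}) :=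
  symmDiff_symmDiff_cancel_left F {i}

theorem map_symmDiff_singleton_of_erel {g : Finset ℕ → Finset ℕ}
    (hg : ∀ i F G, Erel i F G → Erel i (g F) (g G)) (F : Finset ℕ) (i : ℕ) :
    g (F ∆ {i}) = g F ∆ {i} := by
  have h : g F ∆ g (F ∆ {i}) = {i} := hg i F _ (Erel_symmDiff_singleton i F)
  calc g (F ∆ {i}) = g F ∆ (g F ∆ g (F ∆ {i})) := (symmDiff_symmDiff_cancel_left _ _).symm
    _ = g F ∆ {i} := by rw [h]

theorem stmt_2_general (g : Finset ℕ → Finset ℕ)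
    (hpres : ∀ (i : ℕ) (F G : Finset ℕ), Erel i F G ↔ Erel i (g F) (g G))
    (H : Finset ℕ) (hH : g ∅ = H) :
    ∀ F : Finset ℕ, g F = F ∆ H := by
  subst hH
  exact Finset.eq_symmDiff_of_map_symmDiff_singleton
    (map_symmDiff_singleton_of_erel fun i F G => (hpres i F G).1)

theorem stmt_2 (g : Finset ℕ → Finset ℕ) (hbij : Function.Bijective g)
    (hpres : ∀ (i : ℕ) (F G : Finset ℕ), Erel i F G ↔ Erel i (g F) (g G))
    (H : Finset ℕ) (hH : g ∅ = H) :
    ∀ F : Finset ℕ, g F = F ∆ H :=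
  stmt_2_general g hpres H hH
end

section
/- Define P((F,τ),(G,ρ)) to hold iff ρ = τ⌢i for some i and either (i ∉ F and |G| even) or (i ∈ F and |G| odd). If g maps (F,τ) to (F △ H_τ, τ) for each string τ with fixed finite sets H_τ, then g preserves P if and only if for all τ and i: i ∈ H_τ ⟺ |H_{τ⌢i}| is odd. -/
open scoped symmDiff

/-- The parity relation `P` on `[ℕ]^{<ω} × ℕ^{<ω}`:
`P((F,τ),(G,ρ))` holds iff `ρ = τ⌢i` for some `i` and either
(`i ∉ F` and `|G|` is even) or (`i ∈ F` and `|G|` is odd). -/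
def Prel (x y : Finset ℕ × List ℕ) : Prop :=
  ∃ i : ℕ, y.2 = x.2 ++ [i] ∧
    ((i ∉ x.1 ∧ Even y.1.card) ∨ (i ∈ x.1 ∧ Odd y.1.card))

namespace Finset

variable {α : Type*} [DecidableEq α]

theorem card_symmDiff_add_two_mul_card_inter (s t : Finset α) :
    #(s ∆ t) + 2 * #(s ∩ t) = #s + #t := by
  have hunion : #(s ∆ t ∪ s ∩ t) = #(s ∆ t) + #(s ∩ t) :=
    card_union_of_disjoint (disjoint_symmDiff_inf s t)
  rw [show s ∆ t ∪ s ∩ t = s ∪ t from symmDiff_sup_inf s t] at hunion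
  linarith [card_union_add_card_inter s t]

theorem odd_card_symmDiff_iff (s t : Finset α) :
    Odd #(s ∆ t) ↔ ¬(Odd #s ↔ Odd #t) := by
  have := card_symmDiff_add_two_mul_card_inter s t
  simp only [Nat.odd_iff]
  omega

end Finset

theorem prel_iff {x y : Finset ℕ × List ℕ} :
    Prel x y ↔ ∃ i : ℕ, y.2 = x.2 ++ [i] ∧ (i ∈ x.1 ↔ Odd y.1.card) := by
  refine exists_congr fun i => and_congr_right' ?_
  rw [← Nat.not_odd_iff_even]
  tauto

/-- Toggling by `A` flips the membership of `i` exactly when `i ∈ A`, and toggling by `B` flips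
the parity of `|G|` exactly when `|B|` is odd; so `P` survives iff both flips happen together. -/
theorem prel_symmDiff_iff (F G A B : Finset ℕ) (τ ρ : List ℕ) :
    Prel (F ∆ A, τ) (G ∆ B, ρ) ↔
      ∃ i : ℕ, ρ = τ ++ [i] ∧ ((i ∈ F ↔ Odd G.card) ↔ (i ∈ A ↔ Odd B.card)) := by
  rw [prel_iff]
  refine exists_congr fun i => and_congr_right' ?_
  rw [Finset.mem_symmDiff, Finset.odd_card_symmDiff_iff]
  tauto

theorem stmt_11 (H : List ℕ → Finset ℕ) :
    (∀ x y : Finset ℕ × List ℕ,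
        Prel x y ↔ Prel (x.1 ∆ H x.2, x.2) (y.1 ∆ H y.2, y.2)) ↔
    (∀ (τ : List ℕ) (i : ℕ), i ∈ H τ ↔ Odd (H (τ ++ [i])).card) := by
  constructor
  · intro h τ i
    have hP : Prel (∅, τ) (∅, τ ++ [i]) := prel_iff.mpr ⟨i, rfl, by simp⟩
    obtain ⟨j, hj, hflip⟩ := (prel_symmDiff_iff _ _ _ _ _ _).mp ((h _ _).mp hP)
    obtain rfl : i = j := by simpa using hj
    simpa using hflip
  · rintro h ⟨F, τ⟩ ⟨G, ρ⟩
    rw [prel_symmDiff_iff, prel_iff]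
    refine exists_congr fun i => and_congr_right fun hρ => ?_
    rw [hρ, h τ i, iff_self, iff_true]
end
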